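/- Let (λ_j)_{j≥1} be a nonincreasing nonnegative sequence with λ_j ≤ A·j^{-(1+2ν/d)} for constants A > 0, ν > 0, d ≥ 1. Then ∑_{j≥1} log(1 + T·λ_j) ≤ C·T^{d/(2ν+d)}·log(1+T) for a constant C depending only on A, ν, d and all T ≥ 1. -/
import Mathlib

/-- Telescoping inequality: for `0 < ε` and `1 ≤ x`,
`ε * (x+1)^(-(1+ε)) ≤ x^(-ε) - (x+1)^(-ε)`. -/
lemma stmt16_tel {ε x : ℝ} (hε : 0 < ε) (hx : 1 ≤ x) :
    ε * (x + 1) ^ (-(1 + ε)) ≤ x ^ (-ε) - (x + 1) ^ (-ε) := by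
  have hx0 : (0:ℝ) < x := lt_of_lt_of_le one_pos hx
  have hx1 : (0:ℝ) < x + 1 := by linarith
  have hb : 1 + (1 + ε) * (1/x) ≤ (1 + 1/x) ^ (1 + ε) :=
    one_add_mul_self_le_rpow_one_add
      (le_trans (by norm_num) (by positivity : (0:ℝ) ≤ 1/x)) (by linarith)
  have h1x : (1 : ℝ) + 1/x = (x + 1)/x := by field_simp
  have hb' : x + 1 + ε ≤ x * ((x + 1)/x) ^ (1 + ε) := by
    have h := mul_le_mul_of_nonneg_left hb hx0.le
    rw [h1x] at h
    calc x + 1 + ε = x * (1 + (1 + ε) * (1/x)) := by field_simp; ring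
    _ ≤ _ := h
  have h4 : x ^ (-ε) = x / x ^ (1 + ε) := by
    rw [show -ε = 1 - (1 + ε) by ring, Real.rpow_sub hx0, Real.rpow_one]
  have h2 : x * ((x + 1)/x) ^ (1 + ε) = (x + 1) ^ (1 + ε) * x ^ (-ε) := by
    rw [Real.div_rpow hx1.le hx0.le, h4]; ring
  have key : x + 1 + ε ≤ (x + 1) ^ (1 + ε) * x ^ (-ε) := h2 ▸ hb'
  have hc : 0 < (x + 1) ^ (-(1 + ε)) := Real.rpow_pos_of_pos hx1 _
  have h5 : (x + 1) ^ (1 + ε) * (x + 1) ^ (-(1 + ε)) = 1 := by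
    rw [← Real.rpow_add hx1, add_neg_cancel, Real.rpow_zero]
  have h6 : (x + 1) * (x + 1) ^ (-(1 + ε)) = (x + 1) ^ (-ε) := by
    rw [show -ε = 1 + -(1 + ε) by ring, Real.rpow_add hx1, Real.rpow_one]
  have h7 := mul_le_mul_of_nonneg_right key hc.le
  have h8 : (x + 1) ^ (1 + ε) * x ^ (-ε) * (x + 1) ^ (-(1 + ε)) = x ^ (-ε) := by
    calc (x + 1) ^ (1 + ε) * x ^ (-ε) * (x + 1) ^ (-(1 + ε))
        = x ^ (-ε) * ((x + 1) ^ (1 + ε) * (x + 1) ^ (-(1 + ε))) := by ring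
      _ = x ^ (-ε) := by rw [h5, mul_one]
  rw [h8] at h7
  nlinarith [h7, h6]

/-- Tail partial-sum bound via telescoping. -/
lemma stmt16_tail {ε : ℝ} (hε : 0 < ε) (N : ℕ) (hN : 1 ≤ N) (n : ℕ) :
    ∑ i ∈ Finset.range n, ((i + N + 1 : ℕ) : ℝ) ^ (-(1 + ε)) ≤ (N:ℝ) ^ (-ε) / ε := by
  set g : ℕ → ℝ := fun i => ((i + N : ℕ) : ℝ) ^ (-ε) with hg
  have hstep : ∀ i : ℕ, ((i + N + 1 : ℕ) : ℝ) ^ (-(1 + ε)) ≤ (g i - g (i + 1)) / ε := by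
    intro i
    have hx : (1:ℝ) ≤ ((i + N : ℕ) : ℝ) := by
      exact_mod_cast le_trans hN (Nat.le_add_left N i)
    have := stmt16_tel hε hx
    have hcast : ((i + N + 1 : ℕ) : ℝ) = ((i + N : ℕ) : ℝ) + 1 := by push_cast; ring
    have hcast2 : ((i + 1 + N : ℕ) : ℝ) = ((i + N : ℕ) : ℝ) + 1 := by push_cast; ring
    rw [hcast, le_div_iff₀ hε]
    simp only [hg, hcast2]
    nlinarith [this]
  calc ∑ i ∈ Finset.range n, ((i + N + 1 : ℕ) : ℝ) ^ (-(1 + ε))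
      ≤ ∑ i ∈ Finset.range n, (g i - g (i + 1)) / ε :=
        Finset.sum_le_sum fun i _ => hstep i
    _ = (g 0 - g n) / ε := by rw [← Finset.sum_div, Finset.sum_range_sub' g]
    _ ≤ g 0 / ε := by
        have h0 : 0 ≤ g n := Real.rpow_nonneg (by positivity) _
        exact (div_le_div_iff_of_pos_right hε).mpr (by linarith)
    _ = (N:ℝ) ^ (-ε) / ε := by simp [hg]

/-- Information-gain summation bound: if `0 ≤ λ_j` is nonincreasing with
`λ_j ≤ A j^{-(1+2ν/d)}` for `j ≥ 1`, then
`∑_{j≥1} log(1 + T λ_j) ≤ C T^{d/(2ν+d)} log(1+T)` for all `T ≥ 1`. -/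
theorem stmt_16 (d : ℕ) (hd : 1 ≤ d) (ν A : ℝ) (hν : 0 < ν) (hA : 0 < A) :
    ∃ C : ℝ, 0 < C ∧ ∀ lam : ℕ → ℝ,
      (∀ j, 0 ≤ lam j) → (Antitone lam) →
      (∀ j : ℕ, 1 ≤ j → lam j ≤ A * (j : ℝ) ^ (-(1 + 2 * ν / d))) →
      ∀ T : ℝ, 1 ≤ T →
        ∑' j : ℕ, Real.log (1 + T * lam (j + 1)) ≤
          C * T ^ ((d : ℝ) / (2 * ν + d)) * Real.log (1 + T) := by
  have hd0 : (0:ℝ) < d := by exact_mod_cast hd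
  set ε : ℝ := 2 * ν / d with hεdef
  have hε : 0 < ε := by positivity
  set β : ℝ := (d : ℝ) / (2 * ν + d) with hβdef
  have hβpos : 0 < β := by positivity
  have hβε : β * (1 + ε) = 1 := by
    rw [hβdef, hεdef]; field_simp; ring
  have hlog2 : 0 < Real.log 2 := Real.log_pos (by norm_num)
  have hlogA : 0 < Real.log (1 + A) := Real.log_pos (by linarith)
  set K1 : ℝ := 1 + Real.log (1 + A) / Real.log 2 with hK1
  have hK1pos : 0 < K1 := by positivity
  refine ⟨2 * K1 + A / (ε * Real.log 2), by positivity, ?_⟩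
  intro lam hnn hmono hb T hT
  have hT0 : 0 < T := lt_of_lt_of_le one_pos hT
  have hlogT : Real.log 2 ≤ Real.log (1 + T) :=
    Real.log_le_log (by norm_num) (by linarith)
  have hlogTpos : 0 < Real.log (1 + T) := lt_of_lt_of_le hlog2 hlogT
  set N : ℕ := ⌈T ^ β⌉₊ with hNdef
  have hTβ1 : (1:ℝ) ≤ T ^ β := Real.one_le_rpow hT hβpos.le
  have hTβ0 : (0:ℝ) < T ^ β := by linarith
  have hN1 : 1 ≤ N := Nat.one_le_ceil_iff.mpr hTβ0
  have hNT : T ^ β ≤ (N:ℝ) := Nat.le_ceil _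
  have hNle : (N:ℝ) ≤ 2 * T ^ β := by
    have h := Nat.ceil_lt_add_one hTβ0.le
    have : (N:ℝ) < T ^ β + 1 := h
    linarith
  set f : ℕ → ℝ := fun j => Real.log (1 + T * lam (j + 1)) with hf
  have hlam_nn : ∀ j, 0 ≤ T * lam (j + 1) := fun j => mul_nonneg hT0.le (hnn _)
  have hf0 : ∀ j, 0 ≤ f j := fun j => Real.log_nonneg (by linarith [hlam_nn j])
  have hfle : ∀ j, f j ≤ T * lam (j + 1) := by
    intro j
    have := Real.log_le_sub_one_of_pos (show (0:ℝ) < 1 + T * lam (j+1) by linarith [hlam_nn j])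
    simpa using this
  have hbj : ∀ j : ℕ, lam (j + 1) ≤ A * ((j + 1 : ℕ) : ℝ) ^ (-(1 + ε)) := by
    intro j
    have := hb (j + 1) (Nat.le_add_left 1 j)
    simpa using this
  have hmaj : ∀ j, f j ≤ T * A * ((j + 1 : ℕ) : ℝ) ^ (-(1 + ε)) := by
    intro j
    calc f j ≤ T * lam (j + 1) := hfle j
    _ ≤ T * (A * ((j + 1 : ℕ) : ℝ) ^ (-(1 + ε))) :=
        mul_le_mul_of_nonneg_left (hbj j) hT0.le
    _ = T * A * ((j + 1 : ℕ) : ℝ) ^ (-(1 + ε)) := by ring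
  have hsum_maj : Summable (fun j : ℕ => T * A * ((j + 1 : ℕ) : ℝ) ^ (-(1 + ε))) := by
    have h1 : Summable (fun n : ℕ => (n : ℝ) ^ (-(1 + ε))) :=
      Real.summable_nat_rpow.mpr (by linarith)
    exact ((summable_nat_add_iff 1).mpr h1).mul_left (T * A)
  have hsum : Summable f :=
    Summable.of_nonneg_of_le hf0 hmaj hsum_maj
  rw [← Summable.sum_add_tsum_nat_add N hsum]
  -- head bound
  have hlamA : ∀ j : ℕ, lam (j + 1) ≤ A := by
    intro j
    calc lam (j + 1) ≤ A * ((j + 1 : ℕ) : ℝ) ^ (-(1 + ε)) := hbj j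
    _ ≤ A * 1 := by
        apply mul_le_mul_of_nonneg_left ?_ hA.le
        exact Real.rpow_le_one_of_one_le_of_nonpos (by exact_mod_cast Nat.le_add_left 1 j)
          (by linarith)
    _ = A := mul_one A
  have hhead_term : ∀ j, f j ≤ K1 * Real.log (1 + T) := by
    intro j
    have h1 : f j ≤ Real.log (1 + T * A) := by
      apply Real.log_le_log (by linarith [hlam_nn j])
      have := mul_le_mul_of_nonneg_left (hlamA j) hT0.le
      linarith
    have h2 : Real.log (1 + T * A) ≤ Real.log (1 + T) + Real.log (1 + A) := by
      rw [← Real.log_mul (by linarith) (by linarith)]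
      apply Real.log_le_log (by nlinarith)
      nlinarith
    have h3 : Real.log (1 + A) ≤ Real.log (1 + A) / Real.log 2 * Real.log (1 + T) := by
      rw [div_mul_eq_mul_div, le_div_iff₀ hlog2]
      exact mul_le_mul_of_nonneg_left hlogT hlogA.le
    calc f j ≤ Real.log (1 + T) + Real.log (1 + A) := le_trans h1 h2
    _ ≤ Real.log (1 + T) + Real.log (1 + A) / Real.log 2 * Real.log (1 + T) := by linarith
    _ = K1 * Real.log (1 + T) := by rw [hK1]; ring
  have hhead : ∑ i ∈ Finset.range N, f i ≤ 2 * K1 * T ^ β * Real.log (1 + T) := by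
    calc ∑ i ∈ Finset.range N, f i ≤ ∑ _i ∈ Finset.range N, K1 * Real.log (1 + T) :=
          Finset.sum_le_sum fun i _ => hhead_term i
    _ = (N:ℝ) * (K1 * Real.log (1 + T)) := by
        rw [Finset.sum_const, Finset.card_range]; ring
    _ ≤ 2 * T ^ β * (K1 * Real.log (1 + T)) := by
        apply mul_le_mul_of_nonneg_right hNle (by positivity)
    _ = 2 * K1 * T ^ β * Real.log (1 + T) := by ring
  -- tail bound
  have htail : ∑' i : ℕ, f (i + N) ≤ A / (ε * Real.log 2) * T ^ β * Real.log (1 + T) := by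
    have hstep : ∑' i : ℕ, f (i + N) ≤ T * A * ((N:ℝ) ^ (-ε) / ε) := by
      apply Real.tsum_le_of_sum_range_le (fun n => hf0 _)
      intro n
      calc ∑ i ∈ Finset.range n, f (i + N)
          ≤ ∑ i ∈ Finset.range n, T * A * ((i + N + 1 : ℕ) : ℝ) ^ (-(1 + ε)) := by
            apply Finset.sum_le_sum
            intro i _
            have := hmaj (i + N)
            simpa [add_assoc] using this
        _ = T * A * ∑ i ∈ Finset.range n, ((i + N + 1 : ℕ) : ℝ) ^ (-(1 + ε)) := by
            rw [Finset.mul_sum]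
        _ ≤ T * A * ((N:ℝ) ^ (-ε) / ε) := by
            apply mul_le_mul_of_nonneg_left (stmt16_tail hε N hN1 n) (by positivity)
    have hNeps : (N:ℝ) ^ (-ε) ≤ (T ^ β) ^ (-ε) :=
      Real.rpow_le_rpow_of_nonpos hTβ0 hNT (by linarith)
    have hTT : T * (T ^ β) ^ (-ε) = T ^ β := by
      rw [← Real.rpow_mul (le_of_lt hT0),
        show T * T ^ (β * -ε) = T ^ (1:ℝ) * T ^ (β * -ε) by rw [Real.rpow_one],
        ← Real.rpow_add hT0]
      congr 1
      linear_combination -hβε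
    have h1 : T * A * ((N:ℝ) ^ (-ε) / ε) ≤ A / ε * T ^ β := by
      have h2 : T * A * ((N:ℝ) ^ (-ε) / ε) ≤ T * A * ((T ^ β) ^ (-ε) / ε) := by
        exact mul_le_mul_of_nonneg_left ((div_le_div_iff_of_pos_right hε).mpr hNeps) (by positivity)
      calc T * A * ((N:ℝ) ^ (-ε) / ε) ≤ T * A * ((T ^ β) ^ (-ε) / ε) := h2
      _ = A / ε * (T * (T ^ β) ^ (-ε)) := by ring
      _ = A / ε * T ^ β := by rw [hTT]
    have h3 : A / ε * T ^ β ≤ A / (ε * Real.log 2) * T ^ β * Real.log (1 + T) := by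
      rw [div_mul_eq_mul_div, div_mul_eq_mul_div, div_mul_eq_mul_div, div_le_div_iff₀ (by positivity) (by positivity)]
      calc A * T ^ β * (ε * Real.log 2) = A * T ^ β * Real.log 2 * ε := by ring
      _ ≤ A * T ^ β * Real.log (1 + T) * ε := by
          apply mul_le_mul_of_nonneg_right ?_ hε.le
          apply mul_le_mul_of_nonneg_left hlogT (by positivity)
      _ = A * T ^ β * Real.log (1 + T) * ε := rfl
    linarith
  calc ∑ i ∈ Finset.range N, f i + ∑' i : ℕ, f (i + N)
      ≤ 2 * K1 * T ^ β * Real.log (1 + T) + A / (ε * Real.log 2) * T ^ β * Real.log (1 + T) :=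
        add_le_add hhead htail
    _ = (2 * K1 + A / (ε * Real.log 2)) * T ^ β * Real.log (1 + T) := by ring
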